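/- arXiv:1610.02212 — 3 statements merged into one kernel-verified Lean document; each statement's English description precedes it below -/
import Mathlib

section
/- If n ≥ 4 is even and 2 ≤ 2t < n, then the double generalized Petersen graph DP(n, t) has a Hamilton cycle. -/
inductive DPVert (n : ℕ) : Type
  | x : ZMod n → DPVert n
  | u : ZMod n → DPVert n
  | v : ZMod n → DPVert n
  | y : ZMod n → DPVert n
  deriving DecidableEq

def DP (n t : ℕ) : SimpleGraph (DPVert n) :=
  SimpleGraph.fromRel (fun a b =>
    (∃ i, a = DPVert.x i ∧ b = DPVert.x (i + 1)) ∨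
    (∃ i, a = DPVert.y i ∧ b = DPVert.y (i + 1)) ∨
    (∃ i, a = DPVert.x i ∧ b = DPVert.u i) ∨
    (∃ i, a = DPVert.y i ∧ b = DPVert.v i) ∨
    (∃ i, a = DPVert.u i ∧ b = DPVert.v (i + (t : ZMod n))) ∨
    (∃ i, a = DPVert.v i ∧ b = DPVert.u (i + (t : ZMod n))))

/-!
The vertices `x i, u i, v (i + t), y (i + t)` form a path, the `i`-th rung. Walk through the
rungs `0, 1, …, n - 1` in turn, traversing even rungs forwards and odd rungs backwards, and pass
from one rung to the next along `y (i + t) y (i + t + 1)` after an even rung and along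
`x i x (i + 1)` after an odd one. This boustrophedon visits each of the `4 n` vertices once, and
since `n` is even it ends next to its starting point `x 0`. Read as a `4 n`-periodic enumeration
`ℕ → DPVert n` with consecutive values adjacent, it is a spanning copy of the cycle graph.
-/

open SimpleGraph

section CycleEnumeration

variable {V : Type*} [Fintype V] {G : SimpleGraph V}

theorem exists_isHamiltonianCycle_of_cycleGraph_isContained [DecidableEq V]
    (hV : 3 ≤ Fintype.card V) (h : cycleGraph (Fintype.card V) ⊑ G) :
    ∃ (a : V) (p : G.Walk a a), p.IsHamiltonianCycle := by
  obtain ⟨a, p, hp, hlen⟩ := (cycleGraph_isContained_iff hV).mp h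
  exact ⟨a, p, Walk.isHamiltonianCycle_iff_isCycle_and_length_eq.mpr ⟨hp, hlen⟩⟩

theorem cycleGraph_isContained_of_periodic {F : ℕ → V} (hper : F.Periodic (Fintype.card V))
    (hadj : ∀ k, G.Adj (F k) (F (k + 1))) (hsurj : F.Surjective) :
    cycleGraph (Fintype.card V) ⊑ G := by
  have : Nontrivial V := ⟨⟨F 0, F 1, (hadj 0).ne⟩⟩
  obtain ⟨m, hm⟩ := Nat.exists_eq_add_of_le' (Fintype.one_lt_card (α := V))
  rw [hm] at hper ⊢
  let f : Fin (m + 2) → V := fun k => F k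
  have hf : f.Bijective := by
    refine (Fintype.bijective_iff_surjective_and_card f).mpr ⟨fun v => ?_, by simp [hm]⟩
    obtain ⟨k, rfl⟩ := hsurj v
    exact ⟨⟨k % (m + 2), Nat.mod_lt _ (by omega)⟩, hper.map_mod_nat k⟩
  refine ⟨⟨⟨f, fun {u v} huv => ?_⟩, hf.injective⟩⟩
  have hsucc (u : Fin (m + 2)) : f (u + 1) = F (u + 1) := by
    simp only [f, Fin.val_add, Fin.val_one, hper.map_mod_nat]
  rcases cycleGraph_adj.mp huv with h | h
  · rw [sub_eq_iff_eq_add'] at h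
    rw [h, hsucc]
    exact (hadj v).symm
  · rw [sub_eq_iff_eq_add'] at h
    rw [h, hsucc]
    exact hadj u

theorem exists_isHamiltonianCycle_of_periodic [DecidableEq V] (hV : 3 ≤ Fintype.card V)
    {F : ℕ → V} (hper : F.Periodic (Fintype.card V)) (hadj : ∀ k, G.Adj (F k) (F (k + 1)))
    (hsurj : F.Surjective) : ∃ (a : V) (p : G.Walk a a), p.IsHamiltonianCycle :=
  exists_isHamiltonianCycle_of_cycleGraph_isContained hV
    (cycleGraph_isContained_of_periodic hper hadj hsurj)

end CycleEnumeration

namespace DPVert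

variable {n : ℕ}

def equivProd (n : ℕ) : DPVert n ≃ Fin 4 × ZMod n where
  toFun
    | .x i => (0, i)
    | .u i => (1, i)
    | .v i => (2, i)
    | .y i => (3, i)
  invFun
    | (0, i) => .x i
    | (1, i) => .u i
    | (2, i) => .v i
    | (3, i) => .y i
  left_inv := by rintro (i | i | i | i) <;> rfl
  right_inv := by rintro ⟨r, i⟩; fin_cases r <;> rfl

instance [NeZero n] : Fintype (DPVert n) := Fintype.ofEquiv _ (equivProd n).symm

theorem card_eq [NeZero n] : Fintype.card (DPVert n) = 4 * n := by
  simp [Fintype.card_congr (equivProd n)]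

end DPVert

namespace DP

variable {n t : ℕ}

theorem adj_x_u (i : ZMod n) : (DP n t).Adj (.x i) (.u i) := by
  simp [DP]

theorem adj_u_v (i : ZMod n) : (DP n t).Adj (.u i) (.v (i + t)) := by
  simp [DP]

theorem adj_v_y (i : ZMod n) : (DP n t).Adj (.v i) (.y i) := by
  simp [DP]

theorem adj_x_succ [Nontrivial (ZMod n)] (i : ZMod n) : (DP n t).Adj (.x i) (.x (i + 1)) := by
  simp [DP]

theorem adj_y_succ [Nontrivial (ZMod n)] (i : ZMod n) : (DP n t).Adj (.y i) (.y (i + 1)) := by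
  simp [DP]

def rung (t : ℕ) (i : ZMod n) : ℕ → DPVert n
  | 0 => .x i
  | 1 => .u i
  | 2 => .v (i + (t : ZMod n))
  | _ => .y (i + (t : ZMod n))

theorem rung_adj_succ {r : ℕ} (hr : r < 3) (i : ZMod n) :
    (DP n t).Adj (rung t i r) (rung t i (r + 1)) := by
  interval_cases r
  exacts [adj_x_u i, adj_u_v i, adj_v_y _]

theorem exists_rung_eq (a : DPVert n) : ∃ (i : ZMod n) (r : ℕ), r < 4 ∧ rung t i r = a := by
  cases a with
  | x i => exact ⟨i, 0, by norm_num, rfl⟩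
  | u i => exact ⟨i, 1, by norm_num, rfl⟩
  | v j => exact ⟨j - t, 2, by norm_num, by simp [rung]⟩
  | y j => exact ⟨j - t, 3, by norm_num, by simp [rung]⟩

def snake (n t k : ℕ) : DPVert n :=
  rung t (k / 4 : ℕ) (if Even (k / 4) then k % 4 else 3 - k % 4)

theorem snake_four_mul_add {q r : ℕ} (hr : r < 4) :
    snake n t (4 * q + r) = rung t (q : ZMod n) (if Even q then r else 3 - r) := by
  have hq : (4 * q + r) / 4 = q := by omega
  have hr' : (4 * q + r) % 4 = r := by omega
  rw [snake, hq, hr']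

theorem snake_adj_succ [Nontrivial (ZMod n)] (k : ℕ) :
    (DP n t).Adj (snake n t k) (snake n t (k + 1)) := by
  obtain ⟨q, r, hr, rfl⟩ : ∃ q r, r < 4 ∧ k = 4 * q + r :=
    ⟨k / 4, k % 4, Nat.mod_lt k (by norm_num), (Nat.div_add_mod k 4).symm⟩
  rcases (show r < 3 ∨ r = 3 by omega) with hr3 | rfl
  · rw [add_assoc, snake_four_mul_add hr, snake_four_mul_add (by omega : r + 1 < 4)]
    split_ifs
    · exact rung_adj_succ hr3 _
    · rw [show 3 - r = 3 - (r + 1) + 1 by omega]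
      exact (rung_adj_succ (by omega) _).symm
  · rw [show 4 * q + 3 + 1 = 4 * (q + 1) + 0 by ring, snake_four_mul_add (by norm_num),
      snake_four_mul_add (by norm_num)]
    rcases Nat.even_or_odd q with hq | hq
    · simpa [hq, Nat.even_add_one, rung, add_right_comm] using
        adj_y_succ ((q : ZMod n) + (t : ZMod n))
    · simpa [Nat.not_even_iff_odd.mpr hq, Nat.even_add_one, rung] using adj_x_succ (q : ZMod n)

theorem snake_periodic (heven : Even n) : (snake n t).Periodic (4 * n) := by
  intro k
  have hdiv : (k + 4 * n) / 4 = k / 4 + n := by omega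
  have hmod : (k + 4 * n) % 4 = k % 4 := by omega
  simp [snake, hdiv, hmod, Nat.even_add, heven]

theorem snake_surjective [NeZero n] : (snake n t).Surjective := by
  intro a
  obtain ⟨i, r, hr, rfl⟩ := exists_rung_eq (t := t) a
  refine ⟨4 * i.val + if Even i.val then r else 3 - r, ?_⟩
  rw [snake_four_mul_add (by split_ifs <;> omega), ZMod.natCast_zmod_val]
  split_ifs
  · rfl
  · congr 1
    omega

end DP

theorem DP_hamiltonian_of_even_general (n t : ℕ) (hn : 4 ≤ n) (heven : Even n) :
    ∃ (a : DPVert n) (w : (DP n t).Walk a a), w.IsHamiltonianCycle := by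
  have : Fact (1 < n) := ⟨by omega⟩
  refine exists_isHamiltonianCycle_of_periodic (by rw [DPVert.card_eq]; omega) ?_
    DP.snake_adj_succ DP.snake_surjective
  rw [DPVert.card_eq]
  exact DP.snake_periodic heven

theorem DP_hamiltonian_of_even (n t : ℕ) (hn : 4 ≤ n) (heven : Even n)
    (ht : 2 ≤ 2 * t) (htn : 2 * t < n) :
    ∃ (a : DPVert n) (w : (DP n t).Walk a a), w.IsHamiltonianCycle :=
  DP_hamiltonian_of_even_general n t hn heven
end

section
/- For every even n ≥ 4 and 2 ≤ 2t < n, the concatenation of the paths X_i : u_{2i} x_{2i} x_{2i+1} u_{2i+1} v_{2i+1-t} y_{2i+1-t} y_{2i+2-t} v_{2i+2-t} u_{2(i+1)} for i = 0, 1, ..., n/2 − 1 forms a Hamilton cycle in DP(n, t). -/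
/-!
The block `X_i` is a path of length 8 from `u_{2i}` to `u_{2i+2}`, so the `n/2` blocks concatenate
to a closed walk at `u_0`. Block `i` visits `u` and `x` at the indices `2i, 2i+1` and `v` and `y` at
`2i+1-t, 2i+2-t`; as `i` runs over `0, …, n/2-1` these indices run once through `0, …, n-1` and
`1-t, …, n-t`, i.e. once through `ℤ_n`. Hence every vertex occurs exactly once on the walk after its
starting point, which makes it a Hamiltonian cycle.
-/

namespace SimpleGraph.Walk

variable {V : Type*} {G : SimpleGraph V} {a : V}

theorem isHamiltonianCycle_of_support_eq_append [DecidableEq V] {p : G.Walk a a} {L : List V}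
    (hsupp : p.support = L ++ [a]) (hcount : ∀ b, L.count b = 1) (hlen : 3 ≤ L.length) :
    p.IsHamiltonianCycle := by
  obtain ⟨c, K, rfl⟩ : ∃ c K, L = c :: K := List.exists_cons_of_length_pos (by omega)
  obtain ⟨rfl, htail⟩ : a = c ∧ p.support.tail = K ++ [a] := by
    simpa [hsupp] using p.cons_tail_support
  have hcount_tail : ∀ b, p.support.tail.count b = 1 := fun b => by
    rw [htail, (List.perm_append_singleton a K).count_eq, hcount]
  have hlength : 3 ≤ p.length := by
    have := p.length_support
    simp only [hsupp, List.length_append, List.length_cons, List.length_nil] at this hlen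
    omega
  have hnil : ¬ p.Nil := not_nil_iff_lt_length.2 (by omega)
  refine isHamiltonianCycle_iff_isCycle_and_support_count_tail_eq_one.2 ⟨?_, hcount_tail⟩
  refine isCycle_iff_isPath_tail_and_le_length.2 ⟨IsPath.mk' ?_, hlength⟩
  rw [support_tail_of_not_nil p hnil, List.nodup_iff_count_le_one]
  exact fun b => (hcount_tail b).le

end SimpleGraph.Walk

open List in
theorem List.flatMap_range_pair_eq_map_range {α : Type*} (f : ℕ → α) (m : ℕ) :
    (range m).flatMap (fun i => [f (2 * i), f (2 * i + 1)]) = (range (2 * m)).map f := by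
  induction m with
  | zero => rfl
  | succ m ih =>
    rw [range_succ, flatMap_append, ih, show 2 * (m + 1) = 2 * m + 1 + 1 by ring, range_succ,
      range_succ]
    simp

theorem ZMod.count_map_range_eq_one {n : ℕ} [NeZero n] {f : ℕ → ZMod n}
    (hf : ∀ k, f (k + 1) = f k + 1) (j : ZMod n) : ((List.range n).map f).count j = 1 := by
  have hf_eq : ∀ k, f k = f 0 + k := fun k => by
    induction k with
    | zero => simp
    | succ k ih => rw [hf, ih]; push_cast; ring
  refine List.count_eq_one_of_mem ((List.nodup_range).map_on fun a ha b hb hab => ?_) ?_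
  · rw [hf_eq, hf_eq b, add_right_inj, ZMod.natCast_eq_natCast_iff'] at hab
    rwa [Nat.mod_eq_of_lt (List.mem_range.1 ha), Nat.mod_eq_of_lt (List.mem_range.1 hb)] at hab
  · refine List.mem_map.2 ⟨(j - f 0).val, List.mem_range.2 (ZMod.val_lt _), ?_⟩
    rw [hf_eq, ZMod.natCast_zmod_val, add_sub_cancel]

namespace DP

open DPVert SimpleGraph

variable {n t : ℕ}

theorem adj_u_x (j : ZMod n) : (DP n t).Adj (u j) (x j) := by
  simp [DP]

theorem adj_x_x [Fact (1 < n)] {i j : ZMod n} (h : j = i + 1) : (DP n t).Adj (x i) (x j) := by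
  subst h; simp [DP]

theorem adj_y_y [Fact (1 < n)] {i j : ZMod n} (h : j = i + 1) : (DP n t).Adj (y i) (y j) := by
  subst h; simp [DP]

theorem adj_y_v (j : ZMod n) : (DP n t).Adj (y j) (v j) := by
  simp [DP]

theorem adj_v_sub_u (j : ZMod n) : (DP n t).Adj (v (j - t)) (u j) := by
  simp [DP]

def blockList (n t i : ℕ) : List (DPVert n) :=
  [u ((2 * i : ℕ) : ZMod n),
   x ((2 * i : ℕ) : ZMod n),
   x ((2 * i + 1 : ℕ) : ZMod n),
   u ((2 * i + 1 : ℕ) : ZMod n),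
   v (((2 * i + 1 : ℕ) : ZMod n) - (t : ZMod n)),
   y (((2 * i + 1 : ℕ) : ZMod n) - (t : ZMod n)),
   y (((2 * i + 2 : ℕ) : ZMod n) - (t : ZMod n)),
   v (((2 * i + 2 : ℕ) : ZMod n) - (t : ZMod n))]

def blockWalk (n t : ℕ) [Fact (1 < n)] (i : ℕ) :
    (DP n t).Walk (u ((2 * i : ℕ) : ZMod n)) (u ((2 * i + 2 : ℕ) : ZMod n)) :=
  .cons (adj_u_x _) <| .cons (adj_x_x (j := ((2 * i + 1 : ℕ) : ZMod n)) (by push_cast; ring)) <|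
    .cons (adj_u_x _).symm <| .cons (adj_v_sub_u _).symm <| .cons (adj_y_v _).symm <|
    .cons (adj_y_y (j := ((2 * i + 2 : ℕ) : ZMod n) - (t : ZMod n)) (by push_cast; ring)) <|
    .cons (adj_y_v _) <| .cons (adj_v_sub_u _) .nil

theorem support_blockWalk [Fact (1 < n)] (i : ℕ) :
    (blockWalk n t i).support = blockList n t i ++ [u ((2 * i + 2 : ℕ) : ZMod n)] := rfl

def blocksWalk (n t : ℕ) [Fact (1 < n)] :
    (k : ℕ) → (DP n t).Walk (u ((0 : ℕ) : ZMod n)) (u ((2 * k : ℕ) : ZMod n))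
  | 0 => .nil
  | k + 1 => (blocksWalk n t k).append (blockWalk n t k)

theorem support_blocksWalk [Fact (1 < n)] (k : ℕ) :
    (blocksWalk n t k).support
      = (List.range k).flatMap (blockList n t) ++ [u ((2 * k : ℕ) : ZMod n)] := by
  induction k with
  | zero => rfl
  | succ k ih =>
    rw [blocksWalk, Walk.support_append, ih, support_blockWalk, List.range_succ,
      List.flatMap_append, List.flatMap_singleton, show 2 * (k + 1) = 2 * k + 2 by ring]
    simp [blockList]

theorem length_flatMap_blockList (m : ℕ) :
    ((List.range m).flatMap (blockList n t)).length = 8 * m := by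
  simp [blockList, mul_comm]

theorem count_u_blockList (j : ZMod n) (i : ℕ) :
    (blockList n t i).count (u j) = [((2 * i : ℕ) : ZMod n), ((2 * i + 1 : ℕ) : ZMod n)].count j := by
  simp [blockList, List.count_cons]

theorem count_x_blockList (j : ZMod n) (i : ℕ) :
    (blockList n t i).count (x j) = [((2 * i : ℕ) : ZMod n), ((2 * i + 1 : ℕ) : ZMod n)].count j := by
  simp [blockList, List.count_cons]

theorem count_v_blockList (j : ZMod n) (i : ℕ) :
    (blockList n t i).count (v j)
      = [((2 * i + 1 : ℕ) : ZMod n) - t, ((2 * i + 2 : ℕ) : ZMod n) - t].count j := by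
  simp [blockList, List.count_cons]

theorem count_y_blockList (j : ZMod n) (i : ℕ) :
    (blockList n t i).count (y j)
      = [((2 * i + 1 : ℕ) : ZMod n) - t, ((2 * i + 2 : ℕ) : ZMod n) - t].count j := by
  simp [blockList, List.count_cons]

theorem count_flatMap_blockList [NeZero n] {m : ℕ} (hm : n = 2 * m) (a : DPVert n) :
    ((List.range m).flatMap (blockList n t)).count a = 1 := by
  have key (f : ℕ → ZMod n) (hf : ∀ k, f (k + 1) = f k + 1) (j : ZMod n)
      (hblock : ∀ i, (blockList n t i).count a = [f (2 * i), f (2 * i + 1)].count j) :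
      ((List.range m).flatMap (blockList n t)).count a = 1 := by
    rw [List.count_flatMap, Function.comp_def]
    simp_rw [hblock]
    rw [← Function.comp_def (List.count j), ← List.count_flatMap, List.flatMap_range_pair_eq_map_range, ← hm]
    exact ZMod.count_map_range_eq_one hf j
  have hshift : ∀ k, ((k + 1 + 1 : ℕ) : ZMod n) - t = ((k + 1 : ℕ) : ZMod n) - t + 1 := by
    intro k; push_cast; ring
  cases a with
  | u j => exact key _ Nat.cast_succ j (count_u_blockList j)
  | x j => exact key _ Nat.cast_succ j (count_x_blockList j)
  | v j => exact key (fun k => ((k + 1 : ℕ) : ZMod n) - t) hshift j (count_v_blockList j)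
  | y j => exact key (fun k => ((k + 1 : ℕ) : ZMod n) - t) hshift j (count_y_blockList j)

end DP

theorem DP_even_explicit_hamilton_cycle_general (n t : ℕ) (hn : 4 ≤ n) (heven : Even n) :
    ∃ w : (DP n t).Walk (DPVert.u 0) (DPVert.u 0),
      w.IsHamiltonianCycle ∧
      w.support =
        ((List.range (n / 2)).flatMap (fun i =>
          [DPVert.u ((2 * i : ℕ) : ZMod n),
           DPVert.x ((2 * i : ℕ) : ZMod n),
           DPVert.x ((2 * i + 1 : ℕ) : ZMod n),
           DPVert.u ((2 * i + 1 : ℕ) : ZMod n),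
           DPVert.v (((2 * i + 1 : ℕ) : ZMod n) - (t : ZMod n)),
           DPVert.y (((2 * i + 1 : ℕ) : ZMod n) - (t : ZMod n)),
           DPVert.y (((2 * i + 2 : ℕ) : ZMod n) - (t : ZMod n)),
           DPVert.v (((2 * i + 2 : ℕ) : ZMod n) - (t : ZMod n))]))
          ++ [DPVert.u 0] := by
  obtain ⟨m, hm⟩ : ∃ m, n = 2 * m := heven.two_dvd
  have : Fact (1 < n) := ⟨by omega⟩
  have : NeZero n := ⟨by omega⟩
  have hend : DPVert.u ((2 * m : ℕ) : ZMod n) = DPVert.u 0 := by rw [← hm, ZMod.natCast_self]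
  have hsupp : ((DP.blocksWalk n t m).copy (by rw [Nat.cast_zero]) hend).support
      = (List.range m).flatMap (DP.blockList n t) ++ [DPVert.u 0] := by
    rw [SimpleGraph.Walk.support_copy, DP.support_blocksWalk, hend]
  refine ⟨_, SimpleGraph.Walk.isHamiltonianCycle_of_support_eq_append hsupp
    (DP.count_flatMap_blockList hm) (by rw [DP.length_flatMap_blockList]; omega), ?_⟩
  rw [hsupp, hm, Nat.mul_div_cancel_left m two_pos]
  rfl

theorem DP_even_explicit_hamilton_cycle (n t : ℕ) (hn : 4 ≤ n) (heven : Even n)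
    (ht : 2 ≤ 2 * t) (htn : 2 * t < n) :
    ∃ w : (DP n t).Walk (DPVert.u 0) (DPVert.u 0),
      w.IsHamiltonianCycle ∧
      w.support =
        ((List.range (n / 2)).flatMap (fun i =>
          [DPVert.u ((2 * i : ℕ) : ZMod n),
           DPVert.x ((2 * i : ℕ) : ZMod n),
           DPVert.x ((2 * i + 1 : ℕ) : ZMod n),
           DPVert.u ((2 * i + 1 : ℕ) : ZMod n),
           DPVert.v (((2 * i + 1 : ℕ) : ZMod n) - (t : ZMod n)),
           DPVert.y (((2 * i + 1 : ℕ) : ZMod n) - (t : ZMod n)),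
           DPVert.y (((2 * i + 2 : ℕ) : ZMod n) - (t : ZMod n)),
           DPVert.v (((2 * i + 2 : ℕ) : ZMod n) - (t : ZMod n))]))
          ++ [DPVert.u 0] :=
  DP_even_explicit_hamilton_cycle_general n t hn heven
end

section
/- Let n be odd, 2k+1 = gcd(n, t), n = p(2k+1). For each i ∈ ℤ_{2k+1}, the paths R_i : u_{a_{i+1}+t−1} v_{a_{i+1}+2t−1} u_{a_{i+1}+3t−1} ... v_{a_i} and S_i : v_{a_{i+1}−1} u_{a_{i+1}−t−1} v_{a_{i+1}−2t−1} ... u_{a_i+t} are vertex-disjoint subpaths of the cycle C_{i'} (where i' ≡ a_i + t mod 2k+1), and together they contain every vertex of C_{i'}. -/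
/-- `a 0, a 1, …, a (2k)` is a "standard construction" sequence:
each `a i` lies in `{0, …, n-1}`, is congruent to `i` mod `2k+1`, and
`a 0 < a 2 < ⋯ < a (2k) < a 1 < a 3 < ⋯ < a (2k-1)`. -/
def GoodSeq (n k : ℕ) (a : ℕ → ℕ) : Prop :=
  (∀ i ≤ 2 * k, a i < n ∧ a i % (2 * k + 1) = i % (2 * k + 1)) ∧
  (∀ j, j < k → a (2 * j) < a (2 * j + 2)) ∧
  (0 < k → a (2 * k) < a 1) ∧
  (∀ j, j + 1 < k → a (2 * j + 1) < a (2 * j + 3))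

/-- Vertex list of the path `R_i : u_{a_{i+1}+t-1} v_{a_{i+1}+2t-1} … ` with `r+1` vertices. -/
def Rlist (n t k : ℕ) (a : ℕ → ℕ) (i r : ℕ) : List (DPVert n) :=
  (List.range (r + 1)).map (fun j =>
    if Even j then
      DPVert.u ((a ((i + 1) % (2 * k + 1)) : ZMod n) - 1 + (((j + 1) * t : ℕ) : ZMod n))
    else
      DPVert.v ((a ((i + 1) % (2 * k + 1)) : ZMod n) - 1 + (((j + 1) * t : ℕ) : ZMod n)))

/-- Vertex list of the path `S_i : v_{a_{i+1}-1} u_{a_{i+1}-t-1} … ` with `s+1` vertices. -/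
def Slist (n t k : ℕ) (a : ℕ → ℕ) (i s : ℕ) : List (DPVert n) :=
  (List.range (s + 1)).map (fun j =>
    if Even j then
      DPVert.v ((a ((i + 1) % (2 * k + 1)) : ZMod n) - 1 - ((j * t : ℕ) : ZMod n))
    else
      DPVert.u ((a ((i + 1) % (2 * k + 1)) : ZMod n) - 1 - ((j * t : ℕ) : ZMod n)))

/-- `R_i` ends at `v_{a_i}` and `S_i` ends at `u_{a_i + t}` (both have odd length). -/
def RSEnds (n t k : ℕ) (a : ℕ → ℕ) (i r s : ℕ) : Prop :=
  Odd r ∧ (a ((i + 1) % (2 * k + 1)) : ZMod n) - 1 + (((r + 1) * t : ℕ) : ZMod n) = (a i : ZMod n) ∧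
  Odd s ∧ (a ((i + 1) % (2 * k + 1)) : ZMod n) - 1 - ((s * t : ℕ) : ZMod n) = (a i : ZMod n) + (t : ZMod n)

theorem SimpleGraph.exists_walk_support_eq_map_range {V : Type*} {G : SimpleGraph V}
    (f : ℕ → V) (m : ℕ) (hf : ∀ j < m, G.Adj (f j) (f (j + 1))) {x y : V}
    (hx : f 0 = x) (hy : f m = y) :
    ∃ W : G.Walk x y, W.support = (List.range (m + 1)).map f := by
  subst hx hy
  have hne : (List.range (m + 1)).map f ≠ [] := by simp
  have hchain : ((List.range (m + 1)).map f).IsChain G.Adj :=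
    (List.isChain_map f).2 ((List.isChain_range_succ _ m).2 hf)
  exact ⟨(SimpleGraph.Walk.ofSupport _ hne hchain).copy (by simp) (by simp [List.getLast_map]),
    by simp⟩

theorem ZMod.val_mod_eq_val_mod_iff {n g : ℕ} [NeZero n] (hgn : g ∣ n) (x y : ZMod n) :
    x.val % g = y.val % g ↔ ∃ e : ZMod n, x = y + g * e := by
  have hcast : ∀ z : ZMod n, ZMod.castHom hgn (ZMod g) z = z.val := fun z => ZMod.cast_eq_val z
  rw [← ZMod.natCast_eq_natCast_iff', ← hcast, ← hcast]
  constructor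
  · intro h
    have hdvd : g ∣ (x - y).val := by
      rw [← ZMod.natCast_eq_zero_iff, ← hcast, map_sub, h, sub_self]
    refine ⟨((x - y).val / g : ℕ), ?_⟩
    rw [← Nat.cast_mul, Nat.mul_div_cancel' hdvd, ZMod.natCast_zmod_val]
    ring
  · rintro ⟨e, rfl⟩
    rw [map_add, map_mul, map_natCast, ZMod.natCast_self, zero_mul, add_zero]

namespace DP

def zigzag (n t : ℕ) (c : ZMod n) (l : ℤ) : DPVert n :=
  if Even l then .v (c + l * t) else .u (c + l * t)

theorem zigzag_adj_add_one (n t : ℕ) (c : ZMod n) (l : ℤ) :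
    (DP n t).Adj (zigzag n t c l) (zigzag n t c (l + 1)) := by
  have hpos : c + ((l + 1 : ℤ) : ZMod n) * t = c + l * t + t := by push_cast; ring
  rw [DP, SimpleGraph.fromRel_adj, zigzag, zigzag, hpos]
  by_cases hl : Even l
  · rw [if_pos hl, if_neg (Int.even_add_one.not.2 (not_not.2 hl))]
    exact ⟨by simp, .inl <| .inr <| .inr <| .inr <| .inr <| .inr ⟨_, rfl, rfl⟩⟩
  · rw [if_neg hl, if_pos (Int.even_add_one.2 hl)]
    exact ⟨by simp, .inl <| .inr <| .inr <| .inr <| .inr <| .inl ⟨_, rfl, rfl⟩⟩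

theorem zigzag_eq_zigzag_iff (c : ZMod n) (l l' : ℤ) :
    zigzag n t c l = zigzag n t c l' ↔ (Even l ↔ Even l') ∧ (l : ZMod n) * t = l' * t := by
  unfold zigzag
  split_ifs <;> simp [*]

section Period

variable {n t p g : ℕ} [NeZero n]

theorem intCast_mul_eq_zero_iff (hg : n.gcd t = g) (hp : n = p * g) (l : ℤ) :
    (l : ZMod n) * t = 0 ↔ (p : ℤ) ∣ l := by
  have hg0 : 0 < g := hg ▸ Nat.gcd_pos_of_pos_left t (NeZero.pos n)
  obtain ⟨t', ht'⟩ : g ∣ t := hg ▸ Nat.gcd_dvd_right n t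
  have hcop : IsCoprime (p : ℤ) t' := by
    have := Nat.coprime_div_gcd_div_gcd (hg ▸ hg0 : 0 < n.gcd t)
    rwa [hg, Nat.div_eq_of_eq_mul_left hg0 hp, ht', Nat.mul_div_cancel_left _ hg0,
      ← Nat.isCoprime_iff_coprime] at this
  rw [← Int.cast_natCast t, ← Int.cast_mul, ZMod.intCast_zmod_eq_zero_iff_dvd, hp, ht']
  push_cast
  rw [show l * ((g : ℤ) * t') = l * t' * g by ring,
    mul_dvd_mul_iff_right (by exact_mod_cast hg0.ne')]
  exact ⟨hcop.dvd_of_dvd_mul_right, fun h => dvd_mul_of_dvd_left h _⟩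

theorem intCast_add_p_mul (hg : n.gcd t = g) (hp : n = p * g) (l : ℤ) :
    ((l + p : ℤ) : ZMod n) * t = l * t := by
  rw [Int.cast_add, add_mul, (intCast_mul_eq_zero_iff hg hp p).2 dvd_rfl, add_zero]

theorem exists_intCast_mul_eq (hg : n.gcd t = g) (e : ZMod n) :
    ∃ l : ℤ, (l : ZMod n) * t = g * e := by
  have hbezout := congrArg (Int.cast : ℤ → ZMod n) (Nat.gcd_eq_gcd_ab n t)
  push_cast [hg, ZMod.natCast_self] at hbezout
  refine ⟨n.gcdB t * e.val, ?_⟩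
  push_cast [hbezout, ZMod.natCast_zmod_val]
  ring

theorem exists_zigzag_eq_iff (hg : n.gcd t = g) (hp : n = p * g) (hpodd : Odd p) (c : ZMod n)
    (w : DPVert n) :
    (∃ l, zigzag n t c l = w) ↔
      ∃ m : ZMod n, (w = .u m ∨ w = .v m) ∧ m.val % g = c.val % g := by
  obtain ⟨t', rfl⟩ : g ∣ t := hg ▸ Nat.gcd_dvd_right n t
  simp_rw [ZMod.val_mod_eq_val_mod_iff (hg ▸ Nat.gcd_dvd_left n (g * t'))]
  constructor
  · rintro ⟨l, rfl⟩
    refine ⟨c + l * ↑(g * t'), ?_, t' * l, by push_cast; ring⟩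
    unfold zigzag
    split_ifs <;> simp
  · rintro ⟨m, hw, e, rfl⟩
    obtain ⟨l, hl⟩ := exists_intCast_mul_eq hg e
    have hodd : Even (l + p) ↔ ¬ Even l := by
      simp [Int.even_add, Nat.not_even_iff_odd.2 hpodd]
    rcases hw with rfl | rfl <;> by_cases he : Even l
    · exact ⟨l + p, by
        rw [zigzag, if_neg (hodd.not.2 (not_not.2 he)), intCast_add_p_mul hg hp, hl]⟩
    · exact ⟨l, by rw [zigzag, if_neg he, hl]⟩
    · exact ⟨l, by rw [zigzag, if_pos he, hl]⟩
    · exact ⟨l + p, by rw [zigzag, if_pos (hodd.2 he), intCast_add_p_mul hg hp, hl]⟩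

theorem zigzag_eq_iff (hg : n.gcd t = g) (hp : n = p * g) (hpodd : Odd p) (c : ZMod n)
    (l l' : ℤ) : zigzag n t c l = zigzag n t c l' ↔ l ≡ l' [ZMOD 2 * p] := by
  have hcop : IsCoprime (2 : ℤ) p := by
    exact_mod_cast Nat.isCoprime_iff_coprime.2 (Nat.coprime_two_left.2 hpodd)
  rw [zigzag_eq_zigzag_iff, Int.modEq_comm, Int.modEq_iff_dvd, ← Int.even_sub, even_iff_two_dvd,
    ← sub_eq_zero, ← sub_mul, ← Int.cast_sub, intCast_mul_eq_zero_iff hg hp]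
  exact ⟨fun h => hcop.mul_dvd h.1 h.2,
    fun h => ⟨(dvd_mul_right 2 _).trans h, (dvd_mul_left _ 2).trans h⟩⟩

theorem eq_of_zigzag_eq_of_abs_sub_lt (hg : n.gcd t = g) (hp : n = p * g) (hpodd : Odd p)
    (c : ZMod n) {l l' : ℤ} (h : zigzag n t c l = zigzag n t c l') (hll' : |l - l'| < 2 * p) :
    l = l' := by
  have := Int.eq_zero_of_abs_lt_dvd
    (Int.modEq_iff_dvd.1 ((zigzag_eq_iff hg hp hpodd c l l').1 h)) (by rwa [abs_sub_comm])
  omega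

theorem exists_lt_zigzag_add_eq (hg : n.gcd t = g) (hp : n = p * g) (hpodd : Odd p)
    (c : ZMod n) (a l : ℤ) :
    ∃ M : ℕ, M < 2 * p ∧ zigzag n t c (a + M) = zigzag n t c l := by
  have hp0 : (0 : ℤ) < 2 * p := by have := hpodd.pos; omega
  have := Int.emod_lt_of_pos (l - a) hp0
  refine ⟨((l - a) % (2 * p)).toNat, by omega, (zigzag_eq_iff hg hp hpodd c _ _).2 ?_⟩
  rw [Int.toNat_of_nonneg (Int.emod_nonneg _ hp0.ne')]
  calc a + (l - a) % (2 * p) ≡ a + (l - a) [ZMOD 2 * p] := (Int.mod_modEq _ _).add_left a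
    _ = l := by ring

theorem exists_odd_split (hg : n.gcd t = g) (hp : n = p * g) (hpodd : Odd p) {c x : ZMod n}
    (hx : x.val % g = c.val % g) (hxc : x ≠ c) :
    ∃ r s : ℕ, Odd r ∧ Odd s ∧ r + s + 2 = 2 * p ∧
      c + ((r + 1 : ℕ) : ZMod n) * t = x ∧ c - (s : ZMod n) * t = x + t := by
  obtain ⟨l, hl⟩ := (exists_zigzag_eq_iff hg hp hpodd c (.v x)).2 ⟨x, .inr rfl, hx⟩
  obtain ⟨M, hM, hMl⟩ := exists_lt_zigzag_add_eq hg hp hpodd c 0 l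
  rw [hl, zero_add, zigzag] at hMl
  split_ifs at hMl with hMe
  simp only [Int.cast_natCast, DPVert.v.injEq] at hMl
  have hM0 : M ≠ 0 := by rintro rfl; simp [hxc.symm] at hMl
  have h2pt := (intCast_mul_eq_zero_iff hg hp (2 * p)).2 (dvd_mul_left _ _)
  rw [Int.even_coe_nat, Nat.even_iff] at hMe
  refine ⟨M - 1, 2 * p - M - 1, by rw [Nat.odd_iff]; omega, by rw [Nat.odd_iff]; omega,
    by omega, by rwa [Nat.sub_add_cancel (by omega)], ?_⟩
  rw [← hMl, Nat.cast_sub (by omega), Nat.cast_sub (by omega)]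
  push_cast at h2pt ⊢
  linear_combination -h2pt

theorem nodup_map_zigzag_add_one (hg : n.gcd t = g) (hp : n = p * g) (hpodd : Odd p)
    (c : ZMod n) {r : ℕ} (hr : r < 2 * p) :
    ((List.range (r + 1)).map fun j : ℕ => zigzag n t c (j + 1)).Nodup := by
  refine List.Nodup.map_on (fun x hx y hy hxy => ?_) List.nodup_range
  simp only [List.mem_range] at hx hy
  have := eq_of_zigzag_eq_of_abs_sub_lt hg hp hpodd c hxy (by rw [abs_lt]; omega)
  omega

theorem nodup_map_zigzag_neg (hg : n.gcd t = g) (hp : n = p * g) (hpodd : Odd p)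
    (c : ZMod n) {s : ℕ} (hs : s < 2 * p) :
    ((List.range (s + 1)).map fun j : ℕ => zigzag n t c (-j)).Nodup := by
  refine List.Nodup.map_on (fun x hx y hy hxy => ?_) List.nodup_range
  simp only [List.mem_range] at hx hy
  have := eq_of_zigzag_eq_of_abs_sub_lt hg hp hpodd c hxy (by rw [abs_lt]; omega)
  omega

theorem disjoint_map_zigzag (hg : n.gcd t = g) (hp : n = p * g) (hpodd : Odd p)
    (c : ZMod n) {r s : ℕ} (hrs : r + s + 2 = 2 * p) :
    ((List.range (r + 1)).map fun j : ℕ => zigzag n t c (j + 1)).Disjoint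
      ((List.range (s + 1)).map fun j : ℕ => zigzag n t c (-j)) := by
  intro w hR hS
  obtain ⟨x, hx, rfl⟩ := List.mem_map.1 hR
  obtain ⟨y, hy, hxy⟩ := List.mem_map.1 hS
  simp only [List.mem_range] at hx hy
  have := eq_of_zigzag_eq_of_abs_sub_lt hg hp hpodd c hxy (by rw [abs_lt]; omega)
  omega

theorem mem_map_zigzag_or_iff (hg : n.gcd t = g) (hp : n = p * g) (hpodd : Odd p)
    (c : ZMod n) {r s : ℕ} (hrs : r + s + 2 = 2 * p) (w : DPVert n) :
    (w ∈ (List.range (r + 1)).map (fun j : ℕ => zigzag n t c (j + 1)) ∨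
        w ∈ (List.range (s + 1)).map (fun j : ℕ => zigzag n t c (-j))) ↔
      ∃ l, zigzag n t c l = w := by
  constructor
  · rintro (hw | hw) <;> obtain ⟨j, -, rfl⟩ := List.mem_map.1 hw <;> exact ⟨_, rfl⟩
  · rintro ⟨l, rfl⟩
    obtain ⟨M, hM, hMl⟩ := exists_lt_zigzag_add_eq hg hp hpodd c (-s) l
    rw [← hMl, List.mem_map, List.mem_map]
    by_cases hMs : M ≤ s
    · exact .inr ⟨s - M, List.mem_range.2 (by omega), by congr 1; omega⟩
    · exact .inl ⟨M - s - 1, List.mem_range.2 (by omega), by congr 1; omega⟩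

end Period

end DP

theorem Rlist_eq_map_zigzag (n t k : ℕ) (a : ℕ → ℕ) (i r : ℕ) :
    Rlist n t k a i r = (List.range (r + 1)).map fun j : ℕ =>
      DP.zigzag n t ((a ((i + 1) % (2 * k + 1)) : ZMod n) - 1) (j + 1) := by
  refine List.map_congr_left fun j _ => ?_
  by_cases hj : Even j <;> simp [DP.zigzag, hj]

theorem Slist_eq_map_zigzag (n t k : ℕ) (a : ℕ → ℕ) (i s : ℕ) :
    Slist n t k a i s = (List.range (s + 1)).map fun j : ℕ =>
      DP.zigzag n t ((a ((i + 1) % (2 * k + 1)) : ZMod n) - 1) (-j) := by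
  refine List.map_congr_left fun j _ => ?_
  by_cases hj : Even j <;> simp [DP.zigzag, hj, sub_eq_add_neg]

namespace GoodSeq

variable {n k : ℕ} {a : ℕ → ℕ}

theorem even_le_even (ha : GoodSeq n k a) {j j' : ℕ} (hjj' : j ≤ j') (hj' : j' ≤ k) :
    a (2 * j) ≤ a (2 * j') :=
  (strictMonoOn_Iic_of_lt_succ (ψ := fun j => a (2 * j)) fun j hj => by
    simpa [Order.succ_eq_add_one, mul_add] using ha.2.1 j hj).monotoneOn
    (Set.mem_Iic.2 (hjj'.trans hj')) (Set.mem_Iic.2 hj') hjj'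

theorem even_lt_odd (ha : GoodSeq n k a) {j j' : ℕ} (hj : j ≤ k) (hj' : j' < k) :
    a (2 * j) < a (2 * j' + 1) := by
  have h1 := ha.even_le_even hj le_rfl
  have h2 := ha.2.2.1 (by omega)
  have h3 := (strictMonoOn_Iic_of_lt_succ (n := k - 1) (ψ := fun j => a (2 * j + 1))
    fun j hj => by simpa [Order.succ_eq_add_one, mul_add] using ha.2.2.2 j (by omega)).monotoneOn
    (Set.mem_Iic.2 (Nat.zero_le _)) (Set.mem_Iic.2 (by omega)) (Nat.zero_le j')
  simp only [mul_zero, zero_add] at h3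
  omega

theorem add_one_ne (ha : GoodSeq n k a) {i : ℕ} (hi : i ≤ 2 * k) :
    a i + 1 ≠ a ((i + 1) % (2 * k + 1)) := by
  obtain ⟨j, rfl | rfl⟩ := Nat.even_or_odd' i
  · rcases (show j ≤ k by omega).lt_or_eq with hj | rfl
    · have h1 := ha.2.1 j hj
      have h2 := ha.even_lt_odd (j := j + 1) (by omega) hj
      rw [Nat.mod_eq_of_lt (by omega)]
      rw [mul_add, mul_one] at h2
      omega
    · have := ha.even_le_even (Nat.zero_le j) le_rfl
      rw [Nat.mod_self]
      rw [mul_zero] at this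
      omega
  · have := ha.even_lt_odd (j := j + 1) (by omega) (by omega : j < k)
    rw [Nat.mod_eq_of_lt (by omega), show 2 * j + 1 + 1 = 2 * (j + 1) by ring]
    omega

theorem add_one_lt_of_eq_zero (ha : GoodSeq n k a) (hn : 2 ≤ n) {i : ℕ} (hi : i ≤ 2 * k)
    (h0 : a ((i + 1) % (2 * k + 1)) = 0) : a i + 1 < n := by
  have hi' : i = 2 * k := by
    by_contra hne
    have h := (ha.1 _ (Nat.le_of_lt_succ (Nat.mod_lt (i + 1) (by omega)))).2
    rw [h0, Nat.zero_mod, Nat.mod_mod, Nat.mod_eq_of_lt (by omega : i + 1 < 2 * k + 1)] at h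
    omega
  subst hi'
  rcases Nat.eq_zero_or_pos k with rfl | hk
  · simp at h0 ⊢
    omega
  · have := ha.2.2.1 hk
    have := (ha.1 1 (by omega)).1
    omega

theorem natCast_add_one_ne (ha : GoodSeq n k a) (hn : 2 ≤ n) {i : ℕ} (hi : i ≤ 2 * k) :
    (a i : ZMod n) + 1 ≠ a ((i + 1) % (2 * k + 1)) := by
  intro h
  have hA := (ha.1 _ (Nat.le_of_lt_succ (Nat.mod_lt (i + 1) (by omega)))).1
  have hai := (ha.1 i hi).1
  rw [← Nat.cast_add_one, ZMod.natCast_eq_natCast_iff', Nat.mod_eq_of_lt hA] at h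
  rcases (show a i + 1 ≤ n by omega).lt_or_eq with hlt | heq
  · exact ha.add_one_ne hi (by rwa [Nat.mod_eq_of_lt hlt] at h)
  · have := ha.add_one_lt_of_eq_zero hn hi (by rw [← h, heq, Nat.mod_self])
    omega

theorem val_natCast_sub_one_mod {t : ℕ} [NeZero n] (ha : GoodSeq n k a)
    (hgn : 2 * k + 1 ∣ n) (hgt : 2 * k + 1 ∣ t) {i : ℕ} (hi : i ≤ 2 * k) :
    ((a ((i + 1) % (2 * k + 1)) : ZMod n) - 1).val % (2 * k + 1) = (a i + t) % (2 * k + 1) := by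
  have hval := ZMod.cast_eq_val (R := ZMod (2 * k + 1))
    ((a ((i + 1) % (2 * k + 1)) : ZMod n) - 1)
  rw [ZMod.cast_sub hgn, ZMod.cast_natCast hgn, ZMod.cast_one hgn] at hval
  have hA : (a ((i + 1) % (2 * k + 1)) : ZMod (2 * k + 1)) = (i + 1 : ℕ) := by
    rw [ZMod.natCast_eq_natCast_iff', (ha.1 _ (Nat.le_of_lt_succ (Nat.mod_lt _ (by omega)))).2,
      Nat.mod_mod]
  have hai : (a i : ZMod (2 * k + 1)) = i := by
    rw [ZMod.natCast_eq_natCast_iff', (ha.1 i hi).2]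
  rw [← ZMod.natCast_eq_natCast_iff', ← hval, hA]
  push_cast [hai, (ZMod.natCast_eq_zero_iff t _).2 hgt]
  ring

end GoodSeq

theorem R_S_split_cycle_general (n t k p : ℕ) (hn : 3 ≤ n) (hodd : Odd n)
    (hgcd : Nat.gcd n t = 2 * k + 1) (hp : n = p * (2 * k + 1))
    (a : ℕ → ℕ) (ha : GoodSeq n k a) :
    ∀ i < 2 * k + 1, ∃ r s : ℕ, RSEnds n t k a i r s ∧
      ∃ (R : (DP n t).Walk
            (DPVert.u ((a ((i + 1) % (2 * k + 1)) : ZMod n) - 1 + (t : ZMod n)))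
            (DPVert.v (a i)))
        (S : (DP n t).Walk
            (DPVert.v ((a ((i + 1) % (2 * k + 1)) : ZMod n) - 1))
            (DPVert.u ((a i : ZMod n) + (t : ZMod n)))),
        R.IsPath ∧ S.IsPath ∧
        R.support = Rlist n t k a i r ∧ S.support = Slist n t k a i s ∧
        R.support.Disjoint S.support ∧
        ∀ w : DPVert n,
          (w ∈ R.support ∨ w ∈ S.support) ↔
            ∃ m : ZMod n, (w = DPVert.u m ∨ w = DPVert.v m) ∧
              m.val % (2 * k + 1) = (a i + t) % (2 * k + 1) := by
  intro i hi
  have : NeZero n := ⟨by omega⟩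
  have hpodd : Odd p := Nat.Odd.of_mul_left (hp ▸ hodd)
  set c : ZMod n := (a ((i + 1) % (2 * k + 1)) : ZMod n) - 1
  have hclass : c.val % (2 * k + 1) = (a i + t) % (2 * k + 1) := ha.val_natCast_sub_one_mod
    (hgcd ▸ Nat.gcd_dvd_left n t) (hgcd ▸ Nat.gcd_dvd_right n t) (by omega)
  obtain ⟨t', ht'⟩ : 2 * k + 1 ∣ t := hgcd ▸ Nat.gcd_dvd_right n t
  obtain ⟨r, s, hr, hs, hrs, hR_end, hS_end⟩ := DP.exists_odd_split hgcd hp hpodd (c := c)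
    (x := a i) (by rw [ZMod.val_natCast_of_lt (ha.1 i (by omega)).1, hclass, ht',
      Nat.add_mul_mod_self_left])
    (fun h => ha.natCast_add_one_ne (i := i) (by omega) (by omega) (by rw [h]; ring))
  obtain ⟨R, hR⟩ := SimpleGraph.exists_walk_support_eq_map_range
    (fun j : ℕ => DP.zigzag n t c (j + 1)) r (x := .u (c + t)) (y := .v (a i))
    (fun j _ => by simpa [add_assoc] using DP.zigzag_adj_add_one n t c (j + 1))
    (by simp [DP.zigzag]) (by simp [DP.zigzag, hr, ← hR_end])
  obtain ⟨S, hS⟩ := SimpleGraph.exists_walk_support_eq_map_range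
    (fun j : ℕ => DP.zigzag n t c (-j)) s (x := .v c) (y := .u (a i + t))
    (fun j _ => by simpa using (DP.zigzag_adj_add_one n t c (-(j + 1))).symm)
    (by simp [DP.zigzag])
    (by simp [DP.zigzag, Nat.not_even_iff_odd.2 hs, ← hS_end, sub_eq_add_neg])
  have hends : RSEnds n t k a i r s :=
    ⟨hr, by push_cast at hR_end ⊢; exact hR_end, hs, by push_cast; exact hS_end⟩
  refine ⟨r, s, hends, R, S,
    (R.isPath_def).2 (hR ▸ DP.nodup_map_zigzag_add_one hgcd hp hpodd c (by omega)),
    (S.isPath_def).2 (hS ▸ DP.nodup_map_zigzag_neg hgcd hp hpodd c (by omega)),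
    hR.trans (Rlist_eq_map_zigzag ..).symm, hS.trans (Slist_eq_map_zigzag ..).symm,
    hR ▸ hS ▸ DP.disjoint_map_zigzag hgcd hp hpodd c hrs, fun w => ?_⟩
  rw [hR, hS, DP.mem_map_zigzag_or_iff hgcd hp hpodd c hrs, DP.exists_zigzag_eq_iff hgcd hp hpodd,
    hclass]

theorem R_S_split_cycle (n t k p : ℕ) (hn : 3 ≤ n) (ht : 2 ≤ 2 * t) (htn : 2 * t < n)
    (hodd : Odd n) (hgcd : Nat.gcd n t = 2 * k + 1) (hp : n = p * (2 * k + 1))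
    (a : ℕ → ℕ) (ha : GoodSeq n k a) :
    ∀ i < 2 * k + 1, ∃ r s : ℕ, RSEnds n t k a i r s ∧
      ∃ (R : (DP n t).Walk
            (DPVert.u ((a ((i + 1) % (2 * k + 1)) : ZMod n) - 1 + (t : ZMod n)))
            (DPVert.v (a i)))
        (S : (DP n t).Walk
            (DPVert.v ((a ((i + 1) % (2 * k + 1)) : ZMod n) - 1))
            (DPVert.u ((a i : ZMod n) + (t : ZMod n)))),
        R.IsPath ∧ S.IsPath ∧
        R.support = Rlist n t k a i r ∧ S.support = Slist n t k a i s ∧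
        R.support.Disjoint S.support ∧
        ∀ w : DPVert n,
          (w ∈ R.support ∨ w ∈ S.support) ↔
            ∃ m : ZMod n, (w = DPVert.u m ∨ w = DPVert.v m) ∧
              m.val % (2 * k + 1) = (a i + t) % (2 * k + 1) :=
  R_S_split_cycle_general n t k p hn hodd hgcd hp a ha
end
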